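/- arXiv:math/0211234 — 3 statements merged into one kernel-verified Lean document; each statement's English description precedes it below -/
import Mathlib

section
/- For each n ∈ {3, 4, 5, 6, 7}, let f_n : ℝ → ℝ be given by f_n(x) = n·arccos((cos(2π/n) + cos(α(x)/2)²)/sin(α(x)/2)²) where α(x) = π − (2π − x)/n. Then for every x ∈ [0.03, 2.33], the second derivative of f_n at x is strictly negative. -/
open Real

/-- Perimeter of a regular spherical `n`-gon of area `x` on the unit sphere. -/
noncomputable def regPerim (x n : ℝ) : ℝ :=
  n * Real.arccos ((Real.cos (2 * π / n) +
      (Real.cos ((π - (2 * π - x) / n) / 2)) ^ 2) /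
      (Real.sin ((π - (2 * π - x) / n) / 2)) ^ 2)

/-- Circumference of a circle on the unit sphere enclosing area `a`. -/
noncomputable def circPerim0 (a : ℝ) : ℝ := Real.sqrt (4 * π * a - a ^ 2)

/-- Perimeter of the regular spherical pentagon of area `π/3`. -/
noncomputable def p5 : ℝ := 5 * Real.arccos ((4 * Real.cos (2 * π / 5) + 1) / 3)

/-- Derivative at `n = 5` of `n ↦ regPerim (π/3) n`. -/
noncomputable def p5' : ℝ := deriv (fun n : ℝ => regPerim (π / 3) n) 5

/-- `B' = -∂₁ regPerim (π/3, 5)`. -/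
noncomputable def B' : ℝ := - deriv (fun x : ℝ => regPerim x 5) (π / 3)

/-- The isoperimetric functional `I(ℓ, n, t, ρ)`. -/
noncomputable def Ifun (ℓ n t ρ : ℝ) : ℝ := ℓ - t * B' + (5 - n) * p5' - ρ * p5

/-!
Write `u` for half the interior angle of the `n`-gon and `c = cos (2π/n)`. The derivative of the
perimeter in the area is `√(1 + c) · cos u / (sin u · √D)` with `D = 2 sin² u - 1 - c > 0`, and
its derivative in `u` is `-(D + 2 sin² u cos² u) / (sin² u · D · √D) < 0`. Since `u` increases
with the area, the perimeter is strictly concave in the area, for every real `n > 2` and every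
area in `(0, 2π)`.
-/

open Set Filter Topology

/-- The spherical law of cosines in the triangle spanned by the centre and one side of a regular
`n`-gon: with `c = cos (2π/n)` and `u` half the interior angle, this is the side length. -/
noncomputable def sideLength (c u : ℝ) : ℝ := arccos ((c + cos u ^ 2) / sin u ^ 2)

noncomputable def sideSlope (c u : ℝ) : ℝ := cos u / (sin u * √(2 * sin u ^ 2 - 1 - c))

/-- Half the interior angle of the regular `n`-gon of area `x`, by Girard's theorem
`x = n α - (n - 2) π`. -/
noncomputable def halfAngle (x n : ℝ) : ℝ := (π - (2 * π - x) / n) / 2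

section SideLength

variable {c u : ℝ}

theorem hasDerivAt_sideLength (hc : 0 < 1 + c) (hD : 0 < 2 * sin u ^ 2 - 1 - c) :
    HasDerivAt (sideLength c) (2 * √(1 + c) * sideSlope c u) u := by
  have hS : sin u ≠ 0 := by rintro h; rw [h] at hD; linarith
  have hpyth := sin_sq_add_cos_sq u
  set g := (c + cos u ^ 2) / sin u ^ 2 with hg_def
  have hg : HasDerivAt (fun v => (c + cos v ^ 2) / sin v ^ 2)
      (-(2 * (1 + c) * cos u) / sin u ^ 3) u := by
    refine ((((hasDerivAt_cos u).fun_pow 2).const_add c).div ((hasDerivAt_sin u).fun_pow 2)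
      (pow_ne_zero 2 hS)).congr_deriv ?_
    field_simp
    linear_combination (-2 * cos u * sin u) * hpyth
  have h_one_sub : 1 - g = (2 * sin u ^ 2 - 1 - c) / sin u ^ 2 := by
    rw [hg_def, eq_div_iff (pow_ne_zero 2 hS), sub_mul, div_mul_cancel₀ _ (pow_ne_zero 2 hS)]
    linarith
  have h_one_add : 1 + g = (1 + c) / sin u ^ 2 := by
    rw [hg_def, eq_div_iff (pow_ne_zero 2 hS), add_mul, div_mul_cancel₀ _ (pow_ne_zero 2 hS)]
    linarith
  have h_sqrt : √(1 - g ^ 2) = √(1 + c) * √(2 * sin u ^ 2 - 1 - c) / sin u ^ 2 := by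
    rw [show 1 - g ^ 2 = (1 + c) * (2 * sin u ^ 2 - 1 - c) / (sin u ^ 2) ^ 2 by
        rw [show 1 - g ^ 2 = (1 + g) * (1 - g) by ring, h_one_add, h_one_sub]; ring,
      sqrt_div (mul_nonneg hc.le hD.le), sqrt_mul hc.le, sqrt_sq (sq_nonneg _)]
  have h_pos : 0 < 1 - g ∧ 0 < 1 + g := by
    rw [h_one_sub, h_one_add]; constructor <;> positivity
  refine ((hasDerivAt_arccos (by linarith) (by linarith)).comp u hg).congr_deriv ?_
  rw [h_sqrt, sideSlope]
  have hQ : 0 < √(2 * sin u ^ 2 - 1 - c) := sqrt_pos.mpr hD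
  have ha : 0 < √(1 + c) := sqrt_pos.mpr hc
  field_simp
  rw [sq_sqrt hc.le]

theorem hasDerivAt_sideSlope (hS : sin u ≠ 0) (hD : 0 < 2 * sin u ^ 2 - 1 - c) :
    HasDerivAt (sideSlope c)
      (-(2 * sin u ^ 2 - 1 - c + 2 * sin u ^ 2 * cos u ^ 2) /
        (sin u ^ 2 * (2 * sin u ^ 2 - 1 - c) * √(2 * sin u ^ 2 - 1 - c))) u := by
  have hD_deriv : HasDerivAt (fun v => 2 * sin v ^ 2 - 1 - c) (4 * sin u * cos u) u := by
    refine ((((hasDerivAt_sin u).fun_pow 2).const_mul 2).sub_const 1).sub_const c |>.congr_deriv ?_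
    push_cast; ring
  refine ((hasDerivAt_cos u).div ((hasDerivAt_sin u).fun_mul (hD_deriv.sqrt hD.ne'))
    (mul_ne_zero hS (sqrt_pos.mpr hD).ne')).congr_deriv ?_
  set D := 2 * sin u ^ 2 - 1 - c
  set Q := √D
  have hQ : 0 < Q := sqrt_pos.mpr hD
  rw [show D = Q ^ 2 from (sq_sqrt hD.le).symm]
  field_simp
  linear_combination (-2 * Q ^ 2) * sin_sq_add_cos_sq u

end SideLength

section RegPerim

theorem hasDerivAt_halfAngle (x n : ℝ) : HasDerivAt (halfAngle · n) (1 / (2 * n)) x :=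
  ((((hasDerivAt_id x).const_sub (2 * π)).div_const n).const_sub π).div_const 2 |>.congr_deriv
    (by ring)

theorem two_mul_sin_halfAngle_sq_sub_one (x n : ℝ) :
    2 * sin (halfAngle x n) ^ 2 - 1 = cos ((2 * π - x) / n) := by
  rw [halfAngle, show (π - (2 * π - x) / n) / 2 = π / 2 - (2 * π - x) / n / 2 by ring,
    sin_pi_div_two_sub, ← cos_two_mul]
  ring_nf

variable {x n : ℝ}

theorem one_add_cos_two_pi_div_pos (hn : 2 < n) : 0 < 1 + cos (2 * π / n) := by
  have : cos π < cos (2 * π / n) := by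
    apply cos_lt_cos_of_nonneg_of_le_pi (by positivity) le_rfl
    rw [div_lt_iff₀ (by linarith)]
    nlinarith [pi_pos]
  linarith [cos_pi]

theorem cos_two_pi_div_lt_two_mul_sin_halfAngle_sq_sub_one (hn : 2 < n)
    (hx : x ∈ Ioo 0 (2 * π)) : cos (2 * π / n) < 2 * sin (halfAngle x n) ^ 2 - 1 := by
  rw [two_mul_sin_halfAngle_sq_sub_one]
  have hn0 : 0 < n := by linarith
  apply cos_lt_cos_of_nonneg_of_le_pi (div_nonneg (by linarith [hx.2]) hn0.le)
  · rw [div_le_iff₀ hn0]; nlinarith [pi_pos]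
  · exact div_lt_div_of_pos_right (by linarith [hx.1]) hn0

theorem hasDerivAt_regPerim (hn : 2 < n) (hx : x ∈ Ioo 0 (2 * π)) :
    HasDerivAt (regPerim · n)
      (√(1 + cos (2 * π / n)) * sideSlope (cos (2 * π / n)) (halfAngle x n)) x := by
  have hD := cos_two_pi_div_lt_two_mul_sin_halfAngle_sq_sub_one hn hx
  refine ((hasDerivAt_sideLength (one_add_cos_two_pi_div_pos hn) (by linarith)).comp x
    (hasDerivAt_halfAngle x n)).const_mul n |>.congr_deriv ?_
  field_simp

theorem deriv_deriv_regPerim_neg (hn : 2 < n) (hx : x ∈ Ioo 0 (2 * π)) :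
    deriv (deriv (regPerim · n)) x < 0 := by
  set c := cos (2 * π / n)
  have h_deriv : deriv (regPerim · n) =ᶠ[𝓝 x] fun z => √(1 + c) * sideSlope c (halfAngle z n) := by
    filter_upwards [isOpen_Ioo.mem_nhds hx] with z hz
    exact (hasDerivAt_regPerim hn hz).deriv
  have hD : 0 < 2 * sin (halfAngle x n) ^ 2 - 1 - c := by
    linarith [cos_two_pi_div_lt_two_mul_sin_halfAngle_sq_sub_one hn hx]
  have hc : 0 < 1 + c := one_add_cos_two_pi_div_pos hn
  have hS : sin (halfAngle x n) ≠ 0 := by rintro h; rw [h] at hD; linarith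
  have h_deriv2 : HasDerivAt (fun z => √(1 + c) * sideSlope c (halfAngle z n)) _ x :=
    ((hasDerivAt_sideSlope hS hD).comp x (hasDerivAt_halfAngle x n)).const_mul _
  rw [h_deriv.deriv_eq, h_deriv2.deriv]
  have hn0 : 0 < n := by linarith
  refine mul_neg_of_pos_of_neg (sqrt_pos.mpr hc) (mul_neg_of_neg_of_pos ?_ (by positivity))
  exact div_neg_of_neg_of_pos (neg_neg_of_pos (add_pos_of_pos_of_nonneg hD (by positivity)))
    (by positivity)

end RegPerim

/-- Strict concavity of `x ↦ regPerim x n` on `[0.03, 2.33]` for `n = 3,…,7`. -/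
theorem regPerim_second_deriv_neg :
    ∀ n ∈ ({3, 4, 5, 6, 7} : Set ℕ), ∀ x ∈ Set.Icc (0.03 : ℝ) 2.33,
      deriv (deriv (fun y : ℝ => regPerim y (n : ℝ))) x < 0 := by
  intro n hn x hx
  have hn2 : (2 : ℝ) < n := by
    simp only [Set.mem_insert_iff, Set.mem_singleton_iff] at hn
    rcases hn with rfl | rfl | rfl | rfl | rfl <;> norm_num
  exact deriv_deriv_regPerim_neg hn2 ⟨by linarith [hx.1], by linarith [hx.2, pi_gt_three]⟩
end

section
/- Let g : ℝ → ℝ be g(x) = 5·arccos((cos(2π/5) + cos(α(x)/2)²)/sin(α(x)/2)²) where α(x) = π − (2π − x)/5, i.e., g(x) = regPerim(x, 5) is the perimeter of a regular spherical pentagon of area x. Then g is differentiable at π/3 and its derivative g'(π/3) satisfies 1.50 < g'(π/3) < 1.52 (equivalently, the constant B' = −g'(π/3) satisfies −1.52 < B' < −1.50). -/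
/-! With `θ = α/2` and `c = cos (2π/n)`, the side of the polygon has cosine
`u = (c + cos² θ) / sin² θ = (1 + c) / sin² θ - 1`, and `θ' = 1/(2n)`, so the chain rule
gives `∂ₓ regPerim = (1 + c) cos θ / (sin³ θ √(1 - u²))`. For `n = 5` and area `π/3` we have
`θ = π/3`, `c = (√5 - 1)/4` and `u = √5/3`, so the derivative is `(3 + √5)/(2√3) ≈ 1.5115`. -/

open Real

noncomputable def regHalfAngle (x n : ℝ) : ℝ := (π - (2 * π - x) / n) / 2

noncomputable def regSideCos (x n : ℝ) : ℝ :=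
  (cos (2 * π / n) + cos (regHalfAngle x n) ^ 2) / sin (regHalfAngle x n) ^ 2

theorem regPerim_eq_mul_arccos (x n : ℝ) : regPerim x n = n * arccos (regSideCos x n) := rfl

theorem hasDerivAt_regHalfAngle {n : ℝ} (x : ℝ) :
    HasDerivAt (regHalfAngle · n) (1 / (2 * n)) x :=
  ((((hasDerivAt_id x).const_sub (2 * π)).div_const n).const_sub π).div_const 2 |>.congr_deriv
    (by ring)

theorem hasDerivAt_regSideCos {x n : ℝ} (hn : n ≠ 0) (hs : sin (regHalfAngle x n) ≠ 0) :
    HasDerivAt (regSideCos · n)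
      (-(1 + cos (2 * π / n)) * cos (regHalfAngle x n) / (n * sin (regHalfAngle x n) ^ 3)) x := by
  have hθ := hasDerivAt_regHalfAngle (n := n) x
  have hcos := ((hasDerivAt_cos _).comp x hθ).pow 2
  have hsin := ((hasDerivAt_sin _).comp x hθ).pow 2
  refine ((hcos.const_add (cos (2 * π / n))).div hsin (pow_ne_zero 2 hs)).congr_deriv ?_
  have hpy := sin_sq_add_cos_sq (regHalfAngle x n)
  simp only [Pi.pow_apply, Function.comp_apply, Nat.cast_ofNat]
  field_simp
  linear_combination -cos (regHalfAngle x n) * sin (regHalfAngle x n) * hpy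

theorem hasDerivAt_regPerim_s7 {x n : ℝ} (hn : n ≠ 0) (hs : sin (regHalfAngle x n) ≠ 0)
    (h₁ : regSideCos x n ≠ -1) (h₂ : regSideCos x n ≠ 1) :
    HasDerivAt (regPerim · n)
      ((1 + cos (2 * π / n)) * cos (regHalfAngle x n) /
        (sin (regHalfAngle x n) ^ 3 * √(1 - regSideCos x n ^ 2))) x := by
  simp_rw [regPerim_eq_mul_arccos]
  refine (((hasDerivAt_arccos h₁ h₂).comp x (hasDerivAt_regSideCos hn hs)).const_mul n
    ).congr_deriv ?_
  field_simp

theorem cos_two_pi_div_five : cos (2 * π / 5) = (√5 - 1) / 4 := by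
  rw [show 2 * π / 5 = 2 * (π / 5) by ring, cos_two_mul, cos_pi_div_five]
  linear_combination (1 / 8 : ℝ) * sq_sqrt (show (0 : ℝ) ≤ 5 by norm_num)

theorem regHalfAngle_pent : regHalfAngle (π / 3) 5 = π / 3 := by
  unfold regHalfAngle; ring

theorem regSideCos_pent : regSideCos (π / 3) 5 = √5 / 3 := by
  rw [regSideCos, regHalfAngle_pent, cos_two_pi_div_five, cos_pi_div_three, sin_pi_div_three]
  field_simp
  linear_combination -4 * √5 * sq_sqrt (show (0 : ℝ) ≤ 3 by norm_num)

theorem hasDerivAt_regPerim_pent :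
    HasDerivAt (regPerim · 5) ((3 + √5) / (2 * √3)) (π / 3) := by
  have h3 : √3 ^ 2 = 3 := sq_sqrt (by norm_num)
  have h5 : √5 ^ 2 = 5 := sq_sqrt (by norm_num)
  have hroot : √(1 - (√5 / 3) ^ 2) = 2 / 3 := by
    rw [show 1 - (√5 / 3) ^ 2 = (2 / 3) ^ 2 by linear_combination (-1 / 9 : ℝ) * h5]
    exact sqrt_sq (by norm_num)
  refine (hasDerivAt_regPerim_s7 (by norm_num) ?_ ?_ ?_).congr_deriv ?_
  · rw [regHalfAngle_pent, sin_pi_div_three]; positivity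
  · rw [regSideCos_pent]; exact ne_of_gt (by linarith [sqrt_nonneg 5])
  · rw [regSideCos_pent]; exact ne_of_lt (by nlinarith [sqrt_nonneg 5])
  · rw [regSideCos_pent, hroot, regHalfAngle_pent, cos_two_pi_div_five, cos_pi_div_three,
      sin_pi_div_three]
    field_simp
    linear_combination -(12 + 4 * √5) * h3

/-- The area-derivative of the regular-pentagon perimeter at area `π/3`:
`g = regPerim · 5` is differentiable at `π/3` with `1.50 < g'(π/3) < 1.52`. -/
theorem regPerim_deriv_at_pent :
    DifferentiableAt ℝ (fun x : ℝ => regPerim x 5) (π / 3) ∧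
      1.50 < deriv (fun x : ℝ => regPerim x 5) (π / 3) ∧
      deriv (fun x : ℝ => regPerim x 5) (π / 3) < 1.52 := by
  have hg := hasDerivAt_regPerim_pent
  have h3l : (1.732 : ℝ) < √3 := by rw [lt_sqrt (by norm_num)]; norm_num
  have h3u : √3 < 1.7321 := by rw [sqrt_lt' (by norm_num)]; norm_num
  have h5l : (2.236 : ℝ) < √5 := by rw [lt_sqrt (by norm_num)]; norm_num
  have h5u : √5 < 2.2361 := by rw [sqrt_lt' (by norm_num)]; norm_num
  refine ⟨hg.differentiableAt, ?_, ?_⟩ <;> rw [hg.deriv]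
  · rw [lt_div_iff₀ (by positivity)]
    linarith
  · rw [div_lt_iff₀ (by positivity)]
    linarith
end

section
/- Define ρ₁(5) = 0.913, ρ₁(6) = 0.952, ρ₁(7) = 0.99, and T₁(5) = 0.117, T₁(6) = 0.065, T₁(7) = 0.0134. For each n ∈ {5, 6, 7}, each ρ with ρ₁(n) ≤ ρ ≤ 1, and each t with T₁(n) ≤ t ≤ 1.301, one has I(circPerim0(ρπ/3), n, t, ρ) > 0, i.e., √(4π·(ρπ/3) − (ρπ/3)²) − t·B' + (5 − n)·p₅' − ρ·p₅ > 0. -/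
/-!
At `(x, n) = (π/3, 5)` the half-angle of the regular pentagon is `π/3` and the argument of
`arccos` in `regPerim` is `√5/3`, so the chain rule gives closed forms for
`p₅ = 5 arccos (√5/3)`, `B' = -√3 (3 + √5) / 6` and `p₅'`. Since `B' < 0`, `I` increases with
`t`; since `ρ ↦ circPerim0 (ρπ/3)` is `2`-Lipschitz on `[1/2, 1]` while `p₅ ≥ 2`, `I` decreases
in `ρ` there.
So it suffices to check `I (circPerim0 (π/3), n, T₁ n, 1) > 0`, a numerical inequality whose
margin for `n = 7` is only about `10⁻⁴`; it is settled by bounding `arccos (√5/3)` through the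
degree-8 Taylor bound for `cos`.
-/
open Real

/-- The constant `ρ₁` of the proof (values specified only for `n = 5, 6, 7`). -/
noncomputable def rho1 : ℕ → ℝ
  | 5 => 0.913
  | 6 => 0.952
  | 7 => 0.99
  | _ => 1

/-- The constant `T₁` of the proof (values specified only for `n = 5, 6, 7`). -/
noncomputable def T1 : ℕ → ℝ
  | 5 => 0.117
  | 6 => 0.065
  | 7 => 0.0134
  | _ => 0

/-- The constant `T₀` of the proof (values specified only for `n = 5, 6, 7`). -/
noncomputable def T0 : ℕ → ℝ
  | 5 => -0.1382
  | 6 => -0.0711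
  | 7 => -0.01362
  | _ => 0

/-- The constant `ρ₂` of the proof (values specified only for `n = 5, 6, 7`). -/
noncomputable def rho2 : ℕ → ℝ
  | 5 => 0.913
  | 6 => 0.952
  | 7 => 0.99
  | _ => 1

/-- The upper bound `R(n)`: `0.9957` for `n = 5` and `1` otherwise. -/
noncomputable def Rbd : ℕ → ℝ
  | 5 => 0.9957
  | _ => 1

/-- The area lower bound `a(n) = min (3.75 / n², 0.1)`. -/
noncomputable def aFn (n : ℕ) : ℝ := min (3.75 / (n : ℝ) ^ 2) 0.1

theorem le_of_hasDerivAt_le {f g f' g' : ℝ → ℝ} (hf : ∀ y, HasDerivAt f (f' y) y)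
    (hg : ∀ y, HasDerivAt g (g' y) y) (h₀ : f 0 ≤ g 0) (hle : ∀ y, 0 ≤ y → f' y ≤ g' y)
    {x : ℝ} (hx : 0 ≤ x) : f x ≤ g x :=
  image_le_of_deriv_right_le_deriv_boundary (a := 0) (b := x)
    (fun y _ => (hf y).continuousAt.continuousWithinAt) (fun y _ => (hf y).hasDerivWithinAt) h₀
    (fun y _ => (hg y).continuousAt.continuousWithinAt) (fun y _ => (hg y).hasDerivWithinAt)
    (fun y hy => hle y hy.1) ⟨hx, le_rfl⟩

namespace Real

variable {x : ℝ}

theorem cos_le_taylor₄ (hx : 0 ≤ x) : cos x ≤ 1 - x ^ 2 / 2 + x ^ 4 / 24 := by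
  refine le_of_hasDerivAt_le (g := fun y => 1 - y ^ 2 / 2 + y ^ 4 / 24) hasDerivAt_cos
    (fun y => ?_) (by norm_num) (fun y hy => neg_le_neg (sin_ge_sub_cube hy)) hx
  exact ((((hasDerivAt_pow 2 y).div_const 2).const_sub 1).add
    ((hasDerivAt_pow 4 y).div_const 24)).congr_deriv (by ring)

theorem sin_le_taylor₅ (hx : 0 ≤ x) : sin x ≤ x - x ^ 3 / 6 + x ^ 5 / 120 := by
  refine le_of_hasDerivAt_le (g := fun y => y - y ^ 3 / 6 + y ^ 5 / 120) hasDerivAt_sin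
    (fun y => ?_) (by norm_num) (fun y hy => cos_le_taylor₄ hy) hx
  exact (((hasDerivAt_id y).sub ((hasDerivAt_pow 3 y).div_const 6)).add
    ((hasDerivAt_pow 5 y).div_const 120)).congr_deriv (by ring)

theorem taylor₆_le_cos (hx : 0 ≤ x) : 1 - x ^ 2 / 2 + x ^ 4 / 24 - x ^ 6 / 720 ≤ cos x := by
  refine le_of_hasDerivAt_le (f := fun y => 1 - y ^ 2 / 2 + y ^ 4 / 24 - y ^ 6 / 720)
    (fun y => ?_) hasDerivAt_cos (by norm_num) (fun y hy => neg_le_neg (sin_le_taylor₅ hy)) hx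
  exact (((((hasDerivAt_pow 2 y).div_const 2).const_sub 1).add
    ((hasDerivAt_pow 4 y).div_const 24)).sub ((hasDerivAt_pow 6 y).div_const 720)).congr_deriv
    (by ring)

theorem taylor₇_le_sin (hx : 0 ≤ x) : x - x ^ 3 / 6 + x ^ 5 / 120 - x ^ 7 / 5040 ≤ sin x := by
  refine le_of_hasDerivAt_le (f := fun y => y - y ^ 3 / 6 + y ^ 5 / 120 - y ^ 7 / 5040)
    (fun y => ?_) hasDerivAt_sin (by norm_num) (fun y hy => taylor₆_le_cos hy) hx
  exact ((((hasDerivAt_id y).sub ((hasDerivAt_pow 3 y).div_const 6)).add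
    ((hasDerivAt_pow 5 y).div_const 120)).sub ((hasDerivAt_pow 7 y).div_const 5040)).congr_deriv
    (by ring)

theorem cos_le_taylor₈ (hx : 0 ≤ x) :
    cos x ≤ 1 - x ^ 2 / 2 + x ^ 4 / 24 - x ^ 6 / 720 + x ^ 8 / 40320 := by
  refine le_of_hasDerivAt_le
    (g := fun y => 1 - y ^ 2 / 2 + y ^ 4 / 24 - y ^ 6 / 720 + y ^ 8 / 40320) hasDerivAt_cos
    (fun y => ?_) (by norm_num) (fun y hy => neg_le_neg (taylor₇_le_sin hy)) hx
  exact ((((((hasDerivAt_pow 2 y).div_const 2).const_sub 1).add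
    ((hasDerivAt_pow 4 y).div_const 24)).sub ((hasDerivAt_pow 6 y).div_const 720)).add
    ((hasDerivAt_pow 8 y).div_const 40320)).congr_deriv (by ring)

end Real

theorem sin_two_pi_div_five_sq : sin (2 * π / 5) ^ 2 = (5 + √5) / 8 := by
  rw [sin_sq, cos_two_pi_div_five]
  nlinarith [sq_sqrt (show (0 : ℝ) ≤ 5 by norm_num)]

theorem regPerim_arccos_arg :
    (cos (2 * π / 5) + cos (π / 3) ^ 2) / sin (π / 3) ^ 2 = √5 / 3 := by
  rw [cos_two_pi_div_five, cos_pi_div_three, sin_pi_div_three, div_pow √3,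
    sq_sqrt (by norm_num)]
  ring

theorem p5_eq : p5 = 5 * arccos (√5 / 3) := by
  rw [p5, cos_two_pi_div_five]
  ring_nf

theorem hasDerivAt_regPerim_comp {x n : ℝ → ℝ} {x' n' s : ℝ} (hx : HasDerivAt x x' s)
    (hn : HasDerivAt n n' s) (hxs : x s = π / 3) (hns : n s = 5) :
    HasDerivAt (fun s => regPerim (x s) (n s))
      (x' * (√3 * (3 + √5) / 6) +
        n' * (arccos (√5 / 3) - 4 * π / 5 * sin (2 * π / 5) + √3 * π * (3 + √5) / 18)) s := by
  have hn0 : n s ≠ 0 := by rw [hns]; norm_num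
  have hθs : (π - (2 * π - x s) / n s) / 2 = π / 3 := by rw [hxs, hns]; ring
  have hθ := (((hx.const_sub (2 * π)).div hn hn0).const_sub π).div_const 2
  have hc := ((hasDerivAt_const s (2 * π)).div hn hn0).cos
  have hsin : sin ((π - (2 * π - x s) / n s) / 2) ^ 2 ≠ 0 := by
    rw [hθs, sin_pi_div_three]; positivity
  have hq := (hc.add (hθ.cos.pow 2)).div (hθ.sin.pow 2) hsin
  have hqs : (cos (2 * π / n s) + cos ((π - (2 * π - x s) / n s) / 2) ^ 2) /
      sin ((π - (2 * π - x s) / n s) / 2) ^ 2 = √5 / 3 := by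
    rw [hθs, hns, regPerim_arccos_arg]
  have h5 : (√5 : ℝ) ^ 2 = 5 := sq_sqrt (by norm_num)
  have h3 : (√3 : ℝ) ^ 2 = 3 := sq_sqrt (by norm_num)
  have harccos := hasDerivAt_arccos (x := √5 / 3) (by nlinarith [sqrt_nonneg 5])
    (by nlinarith [sqrt_nonneg 5])
  rw [← hqs] at harccos
  have hroot : √(1 - (√5 / 3) ^ 2) = 2 / 3 := by
    rw [show 1 - (√5 / 3) ^ 2 = (2 / 3) ^ 2 by rw [div_pow, h5]; norm_num]
    exact sqrt_sq (by norm_num)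
  refine (hn.mul (harccos.comp s hq)).congr_deriv ?_
  simp only [Function.comp_apply, Pi.add_apply, Pi.div_apply, Pi.pow_apply]
  rw [hqs, hθs, hxs, hns, hroot, cos_pi_div_three, sin_pi_div_three, cos_two_pi_div_five]
  field_simp
  ring_nf
  have h3' : √3 ^ 3 = 3 * √3 := by linear_combination √3 * h3
  have h4 : √3 ^ 4 = 9 := by linear_combination (√3 ^ 2 + 3) * h3
  have h5' : √3 ^ 5 = 9 * √3 := by linear_combination (√3 ^ 3 + 3 * √3) * h3
  simp only [h3, h3', h4, h5']
  ring

theorem B'_eq : B' = -(√3 * (3 + √5) / 6) := by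
  have h : HasDerivAt (fun x => regPerim x 5) _ (π / 3) :=
    hasDerivAt_regPerim_comp (hasDerivAt_id _) (hasDerivAt_const _ _) rfl rfl
  rw [B', h.deriv]
  ring

theorem p5'_eq :
    p5' = arccos (√5 / 3) - 4 * π / 5 * sin (2 * π / 5) + √3 * π * (3 + √5) / 18 := by
  have h : HasDerivAt (fun n => regPerim (π / 3) n) _ 5 :=
    hasDerivAt_regPerim_comp (hasDerivAt_const _ _) (hasDerivAt_id _) rfl rfl
  rw [p5', h.deriv]
  ring

theorem arccos_sqrt_five_div_three_le : arccos (√5 / 3) ≤ 0.72973 := by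
  have hcos : cos 0.72973 ≤ √5 / 3 := by
    have h := cos_le_taylor₈ (x := 0.72973) (by norm_num)
    nlinarith [sq_sqrt (show (0 : ℝ) ≤ 5 by norm_num), sqrt_nonneg 5]
  calc arccos (√5 / 3) ≤ arccos (cos 0.72973) := arccos_le_arccos hcos
    _ = 0.72973 := arccos_cos (by norm_num) (by linarith [pi_gt_three])

theorem two_fifths_le_arccos_sqrt_five_div_three : 0.4 ≤ arccos (√5 / 3) := by
  have hcos : √5 / 3 ≤ cos 0.4 := by
    have h := one_sub_sq_div_two_le_cos (x := 0.4)
    nlinarith [sq_sqrt (show (0 : ℝ) ≤ 5 by norm_num), sqrt_nonneg 5]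
  calc (0.4 : ℝ) = arccos (cos 0.4) :=
        (arccos_cos (by norm_num) (by linarith [pi_gt_three])).symm
    _ ≤ arccos (√5 / 3) := arccos_le_arccos hcos

theorem circPerim0_mul_pi_div_three (ρ : ℝ) :
    circPerim0 (ρ * π / 3) = π / 3 * √(12 * ρ - ρ ^ 2) := by
  have h : 4 * π * (ρ * π / 3) - (ρ * π / 3) ^ 2 = (π / 3) ^ 2 * (12 * ρ - ρ ^ 2) := by ring
  rw [circPerim0, h, sqrt_mul (by positivity), sqrt_sq (by positivity)]

theorem circPerim0_pi_div_three : circPerim0 (π / 3) = π / 3 * √11 := by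
  have h := circPerim0_mul_pi_div_three 1
  norm_num at h
  exact h

theorem sqrt_eleven_sub_sqrt_le {ρ : ℝ} (h₁ : 1 / 2 ≤ ρ) (h₂ : ρ ≤ 1) :
    √11 - √(12 * ρ - ρ ^ 2) ≤ 1.9 * (1 - ρ) := by
  have hu := sq_sqrt (show 0 ≤ 12 * ρ - ρ ^ 2 by nlinarith)
  have hv := sq_sqrt (show (0 : ℝ) ≤ 11 by norm_num)
  have hu₀ : 2.39 ≤ √(12 * ρ - ρ ^ 2) := by nlinarith [sqrt_nonneg (12 * ρ - ρ ^ 2)]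
  have hv₀ : 3.3 ≤ √11 := by nlinarith [sqrt_nonneg 11]
  nlinarith [mul_nonneg (sub_nonneg.2 h₂)
    (add_nonneg (sqrt_nonneg 11) (sqrt_nonneg (12 * ρ - ρ ^ 2)))]

theorem circPerim0_pi_div_three_le {ρ : ℝ} (h₁ : 1 / 2 ≤ ρ) (h₂ : ρ ≤ 1) :
    circPerim0 (π / 3) ≤ circPerim0 (ρ * π / 3) + 2 * (1 - ρ) := by
  rw [circPerim0_pi_div_three, circPerim0_mul_pi_div_three]
  nlinarith [sqrt_eleven_sub_sqrt_le h₁ h₂, pi_lt_d2, pi_pos]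

theorem B'_neg : B' < 0 := by
  rw [B'_eq, neg_lt_zero]
  positivity

theorem monotone_Ifun_t (ℓ n ρ : ℝ) : Monotone fun t => Ifun ℓ n t ρ := fun _ _ h => by
  simp only [Ifun]
  linarith [mul_le_mul_of_nonpos_right h B'_neg.le]

theorem two_le_p5 : 2 ≤ p5 := by
  rw [p5_eq]
  linarith [two_fifths_le_arccos_sqrt_five_div_three]

theorem Ifun_one_le_Ifun {ρ : ℝ} (h₁ : 1 / 2 ≤ ρ) (h₂ : ρ ≤ 1) (n t : ℝ) :
    Ifun (circPerim0 (π / 3)) n t 1 ≤ Ifun (circPerim0 (ρ * π / 3)) n t ρ := by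
  simp only [Ifun]
  linarith [circPerim0_pi_div_three_le h₁ h₂,
    mul_le_mul_of_nonneg_left two_le_p5 (sub_nonneg.2 h₂)]

theorem sin_two_pi_div_five_ge : 0.951056 ≤ sin (2 * π / 5) := by
  have hpos : 0 < sin (2 * π / 5) := sin_pos_of_pos_of_lt_pi (by positivity) (by linarith [pi_pos])
  have h5 : 2.2360679 ≤ √5 := le_sqrt_of_sq_le (by norm_num)
  nlinarith [sin_two_pi_div_five_sq]

theorem Ifun_T1_pos {n : ℕ} (hn : n ∈ ({5, 6, 7} : Set ℕ)) :
    0 < Ifun (circPerim0 (π / 3)) n (T1 n) 1 := by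
  have hπ₁ := pi_gt_d6
  have hπ₂ := pi_lt_d6
  have h3₁ : 1.7320508 ≤ √3 := le_sqrt_of_sq_le (by norm_num)
  have h3₂ : √3 ≤ 1.7320509 := (sqrt_le_left (by norm_num)).2 (by norm_num)
  have h5₁ : 2.2360679 ≤ √5 := le_sqrt_of_sq_le (by norm_num)
  have h5₂ : √5 ≤ 2.236068 := (sqrt_le_left (by norm_num)).2 (by norm_num)
  have h11 : 3.3166247 ≤ √11 := le_sqrt_of_sq_le (by norm_num)
  have hK₁ : 1.511522 ≤ √3 * (3 + √5) / 6 := by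
    nlinarith [mul_nonneg (sub_nonneg.2 h3₁) (sub_nonneg.2 h5₁)]
  have hK₂ : √3 * (3 + √5) / 6 ≤ 1.511523 := by
    nlinarith [mul_nonneg (sub_nonneg.2 h3₂) (sub_nonneg.2 h5₂), sqrt_nonneg 3]
  have hb : 3.47316 ≤ π / 3 * √11 := by
    nlinarith [mul_nonneg (sub_nonneg.2 hπ₁.le) (sub_nonneg.2 h11)]
  have hS := sin_two_pi_div_five_ge
  have hp5' : p5' ≤ arccos (√5 / 3) - 2.39026 + 1.582864 := by
    rw [p5'_eq]
    nlinarith [mul_nonneg (sub_nonneg.2 hπ₁.le) (sub_nonneg.2 hS),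
      mul_nonneg pi_pos.le (sub_nonneg.2 hK₂)]
  have hA := arccos_sqrt_five_div_three_le
  rw [Ifun, circPerim0_pi_div_three, B'_eq, p5_eq]
  rcases hn with rfl | rfl | rfl <;> norm_num [T1] <;> linarith

theorem half_le_rho1 (n : ℕ) : 1 / 2 ≤ rho1 n := by
  unfold rho1
  split <;> norm_num

theorem case_T_large_pos :
    ∀ n ∈ ({5, 6, 7} : Set ℕ), ∀ ρ ∈ Set.Icc (rho1 n) 1,
      ∀ t ∈ Set.Icc (T1 n) 1.301,
        Ifun (circPerim0 (ρ * π / 3)) (n : ℝ) t ρ > 0 := by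
  intro n hn ρ hρ t ht
  calc 0 < Ifun (circPerim0 (π / 3)) n (T1 n) 1 := Ifun_T1_pos hn
    _ ≤ Ifun (circPerim0 (π / 3)) n t 1 := monotone_Ifun_t _ _ _ ht.1
    _ ≤ Ifun (circPerim0 (ρ * π / 3)) n t ρ :=
      Ifun_one_le_Ifun ((half_le_rho1 n).trans hρ.1) hρ.2 _ _
end
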